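/- arXiv:2210.10831 — 5 statements merged into one kernel-verified Lean document; each statement's English description precedes it below -/
import Mathlib

section
/- Let S ⊆ ℝⁿ be a nonempty closed convex set. Then ℝⁿ \ S equals the union over x ∈ S of the sets x + (N_S(x) \ {0}). -/
open RealInnerProductSpace

section NormalCone

variable {E : Type*} [NormedAddCommGroup E] [InnerProductSpace ℝ E]

def normalCone (S : Set E) (x : E) : Set E :=
  {d | ∀ y ∈ S, ⟪y - x, d⟫ ≤ 0}

theorem eq_zero_of_mem_normalCone_of_add_mem {S : Set E} {x d : E}
    (hd : d ∈ normalCone S x) (hxd : x + d ∈ S) : d = 0 := by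
  have := hd (x + d) hxd
  rwa [add_sub_cancel_left, real_inner_self_nonpos] at this

/-- The witness is the nearest point of `S` to `z`. -/
theorem exists_sub_mem_normalCone {S : Set E} (hne : S.Nonempty) (hc : IsComplete S)
    (hconv : Convex ℝ S) (z : E) : ∃ x ∈ S, z - x ∈ normalCone S x := by
  obtain ⟨x, hxS, hx⟩ := exists_norm_eq_iInf_of_complete_convex hne hc hconv z
  rw [norm_eq_iInf_iff_real_inner_le_zero hconv hxS] at hx
  exact ⟨x, hxS, fun y hy => real_inner_comm (z - x) (y - x) ▸ hx y hy⟩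

end NormalCone

theorem complement_eq_union_normal_cones (n : ℕ) (S : Set (EuclideanSpace ℝ (Fin n)))
    (hS : S.Nonempty) (hcl : IsClosed S) (hconv : Convex ℝ S) :
    Sᶜ = ⋃ x ∈ S, (x + ·) ''
      ({d | ∀ y ∈ S, (inner ℝ (y - x) d : ℝ) ≤ 0} \ {0}) := by
  change Sᶜ = ⋃ x ∈ S, (x + ·) '' (normalCone S x \ {0})
  ext z
  constructor
  · intro hz
    obtain ⟨x, hxS, hx⟩ := exists_sub_mem_normalCone hS hcl.isComplete hconv z
    have hzx : z - x ≠ 0 := sub_ne_zero.2 (ne_of_mem_of_not_mem hxS hz).symm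
    exact Set.mem_biUnion hxS ⟨z - x, ⟨hx, hzx⟩, add_sub_cancel x z⟩
  · simp only [Set.mem_iUnion, Set.mem_image]
    rintro ⟨x, -, d, ⟨hd, hd0⟩, rfl⟩ hxd
    exact hd0 (eq_zero_of_mem_normalCone_of_add_mem hd hxd)
end

section
/- Let A be a nonempty set, M ⊆ ℝⁿ nonempty, S = conv M, and g : A × S → ℝ such that g(u, ·) is quasiconvex on S for every u ∈ A. Then {x⁰ ∈ A : g(x⁰, x) ≤ 0 ∀x ∈ S} = {x⁰ ∈ A : g(x⁰, x) ≤ 0 ∀x ∈ M}. -/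
theorem equilibrium_conv_hull {α : Type*} (n : ℕ) (A : Set α) (hA : A.Nonempty)
    (M : Set (EuclideanSpace ℝ (Fin n))) (hM : M.Nonempty)
    (S : Set (EuclideanSpace ℝ (Fin n))) (hSM : S = convexHull ℝ M)
    (g : α → EuclideanSpace ℝ (Fin n) → ℝ)
    (hqc : ∀ u ∈ A, ∀ v' ∈ S, ∀ v'' ∈ S, ∀ t ∈ Set.Icc (0:ℝ) 1,
      g u ((1 - t) • v' + t • v'') ≤ max (g u v') (g u v'')) :
    {x0 ∈ A | ∀ x ∈ S, g x0 x ≤ 0} = {x0 ∈ A | ∀ x ∈ M, g x0 x ≤ 0} := by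
  subst hSM
  have hMS : M ⊆ convexHull ℝ M := subset_convexHull ℝ M
  ext x0
  simp only [Set.mem_setOf_eq]
  constructor
  · rintro ⟨hA0, h⟩
    exact ⟨hA0, fun x hx => h x (hMS hx)⟩
  · rintro ⟨hA0, h⟩
    refine ⟨hA0, fun x hx => ?_⟩
    have hT : Convex ℝ {x ∈ convexHull ℝ M | g x0 x ≤ 0} := by
      rintro a ⟨haS, hag⟩ b ⟨hbS, hbg⟩ s t hs ht hst
      have hSconv : Convex ℝ (convexHull ℝ M) := convex_convexHull ℝ M
      have hsa : s = 1 - t := by linarith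
      refine ⟨hSconv haS hbS hs ht hst, ?_⟩
      have := hqc x0 hA0 a haS b hbS t ⟨ht, by linarith⟩
      rw [hsa]
      exact le_trans this (max_le hag hbg)
    have hsub : convexHull ℝ M ⊆ {x ∈ convexHull ℝ M | g x0 x ≤ 0} := by
      exact convexHull_min (fun m hm => ⟨hMS hm, h m hm⟩) hT
    exact (hsub hx).2
end

section
/- Let M ⊆ ℝⁿ be nonempty, S = conv M, and f : S → ℝ quasiconcave. Then argmin over S of f is nonempty if and only if argmin over M of f is nonempty, and in that case min f(S) = min f(M). -/
theorem argmin_quasiconcave_nonempty_iff (n : ℕ) (M : Set (EuclideanSpace ℝ (Fin n)))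
    (hM : M.Nonempty) (S : Set (EuclideanSpace ℝ (Fin n))) (hSM : S = convexHull ℝ M)
    (f : EuclideanSpace ℝ (Fin n) → ℝ)
    (hqc : ∀ x ∈ S, ∀ y ∈ S, ∀ t ∈ Set.Icc (0:ℝ) 1,
      min (f x) (f y) ≤ f ((1 - t) • x + t • y)) :
    ({x0 ∈ S | ∀ x ∈ S, f x0 ≤ f x}.Nonempty ↔ {x0 ∈ M | ∀ x ∈ M, f x0 ≤ f x}.Nonempty) ∧
      (∀ x0 ∈ {x0 ∈ S | ∀ x ∈ S, f x0 ≤ f x}, ∀ y0 ∈ {x0 ∈ M | ∀ x ∈ M, f x0 ≤ f x},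
        f x0 = f y0) := by
  subst hSM
  have hMS : M ⊆ convexHull ℝ M := subset_convexHull ℝ M
  have hconv : Convex ℝ (convexHull ℝ M) := convex_convexHull ℝ M
  -- an M-minimizer is an S-minimizer
  have key : ∀ y0 ∈ M, (∀ x ∈ M, f y0 ≤ f x) → ∀ x ∈ convexHull ℝ M, f y0 ≤ f x := by
    intro y0 hy0 hmin
    have hT : Convex ℝ {x | x ∈ convexHull ℝ M ∧ f y0 ≤ f x} := by
      intro x hx y hy a b ha hb hab
      refine ⟨hconv hx.1 hy.1 ha hb hab, ?_⟩
      have hq := hqc x hx.1 y hy.1 b ⟨hb, by linarith⟩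
      have hab' : (1 - b) = a := by linarith
      rw [hab'] at hq
      calc f y0 ≤ min (f x) (f y) := le_min hx.2 hy.2
        _ ≤ _ := hq
    have hsub : convexHull ℝ M ⊆ {x | x ∈ convexHull ℝ M ∧ f y0 ≤ f x} :=
      convexHull_min (fun m hm => ⟨hMS hm, hmin m hm⟩) hT
    exact fun x hx => (hsub hx).2
  -- every point of S dominates some point of M
  have key2 : ∀ x ∈ convexHull ℝ M, ∃ m ∈ M, f m ≤ f x := by
    have hT : Convex ℝ {x | x ∈ convexHull ℝ M ∧ ∃ m ∈ M, f m ≤ f x} := by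
      intro x hx y hy a b ha hb hab
      obtain ⟨m1, hm1, hfm1⟩ := hx.2
      obtain ⟨m2, hm2, hfm2⟩ := hy.2
      refine ⟨hconv hx.1 hy.1 ha hb hab, ?_⟩
      have hq := hqc x hx.1 y hy.1 b ⟨hb, by linarith⟩
      have hab' : (1 - b) = a := by linarith
      rw [hab'] at hq
      rcases le_total (f x) (f y) with h | h
      · exact ⟨m1, hm1, hfm1.trans (by rw [min_eq_left h] at hq; exact hq)⟩
      · exact ⟨m2, hm2, hfm2.trans (by rw [min_eq_right h] at hq; exact hq)⟩
    have hsub : convexHull ℝ M ⊆ {x | x ∈ convexHull ℝ M ∧ ∃ m ∈ M, f m ≤ f x} :=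
      convexHull_min (fun m hm => ⟨hMS hm, ⟨m, hm, le_refl _⟩⟩) hT
    exact fun x hx => (hsub hx).2
  constructor
  · constructor
    · rintro ⟨x0, hx0S, hx0min⟩
      obtain ⟨m, hm, hfm⟩ := key2 x0 hx0S
      exact ⟨m, hm, fun x hx => hfm.trans (hx0min x (hMS hx))⟩
    · rintro ⟨y0, hy0M, hy0min⟩
      exact ⟨y0, hMS hy0M, key y0 hy0M hy0min⟩
  · rintro x0 ⟨hx0S, hx0min⟩ y0 ⟨hy0M, hy0min⟩
    exact le_antisymm (hx0min y0 (hMS hy0M)) (key y0 hy0M hy0min x0 hx0S)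
end

section
/- Let S ⊆ ℝⁿ be a nonempty compact convex set and g : S × S → ℝ such that for every u ∈ S, g(u, ·) is quasiconvex and lower semicontinuous on S. Then {x⁰ ∈ S : g(x⁰, x) ≤ 0 ∀x ∈ S} = {x⁰ ∈ S : g(x⁰, x) ≤ 0 ∀x ∈ exp S}. -/
/-!
A compact set lies in every closed convex set `T` containing its exposed points. Indeed, if
`x ∈ S \ T`, separate `x` from `T` by a half-space `⟪c, ·⟫ < u`. A farthest point of `S` from
`x + R • c` is exposed, and for `R` large it still lies in that half-space, hence outside `T`.
This is applied to `T = {x ∈ S | g x0 x ≤ 0}`, which is convex by quasiconvexity and closed by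
lower semicontinuity.
-/

open Set

theorem LowerSemicontinuousOn.isClosed_inter_preimage_Iic {α γ : Type*} [TopologicalSpace α]
    [LinearOrder γ] [TopologicalSpace γ] [OrderTopology γ] {f : α → γ} {s : Set α}
    (hf : LowerSemicontinuousOn f s) (hs : IsClosed s) (b : γ) :
    IsClosed (s ∩ f ⁻¹' Iic b) := by
  obtain ⟨v, hv, hsv⟩ := lowerSemicontinuousOn_iff_preimage_Iic.1 hf b
  exact hsv ▸ hs.inter hv

theorem quasiconvexOn_of_le_max {E β : Type*} [AddCommMonoid E] [Module ℝ E] [LinearOrder β]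
    {s : Set E} {f : E → β} (hs : Convex ℝ s)
    (hf : ∀ x ∈ s, ∀ y ∈ s, ∀ t ∈ Icc (0 : ℝ) 1, f ((1 - t) • x + t • y) ≤ max (f x) (f y)) :
    QuasiconvexOn ℝ s f := by
  refine quasiconvexOn_iff_le_max.2 ⟨hs, fun x hx y hy a b ha hb hab => ?_⟩
  obtain rfl : a = 1 - b := by linarith
  exact hf x hx y hy b ⟨hb, by linarith⟩

section InnerProductSpace

variable {E : Type*} [NormedAddCommGroup E] [InnerProductSpace ℝ E]

open scoped RealInnerProductSpace

/-- The exposed points `exp S`, with the exposing functionals written as inner products. -/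
def innerExposedPoints (S : Set E) : Set E :=
  {p ∈ S | ∃ c : E, ∀ y ∈ S, y ≠ p → ⟪c, p⟫ < ⟪c, y⟫}

theorem inner_lt_of_isMaxOn_dist {S : Set E} {z p y : E}
    (hp : IsMaxOn (dist · z) S p) (hy : y ∈ S) (hyp : y ≠ p) :
    ⟪z - p, p⟫ < ⟪z - p, y⟫ := by
  have hdist : ‖y - z‖ ^ 2 ≤ ‖p - z‖ ^ 2 := by
    have : dist y z ≤ dist p z := hp hy
    rw [dist_eq_norm, dist_eq_norm] at this
    gcongr
  have hexpand : ‖y - z‖ ^ 2 = ‖y - p‖ ^ 2 + 2 * ⟪y - p, p - z⟫ + ‖p - z‖ ^ 2 := by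
    rw [← norm_add_sq_real, sub_add_sub_cancel]
  have hinner : ⟪y - p, p - z⟫ = ⟪z - p, p⟫ - ⟪z - p, y⟫ := by
    simp only [inner_sub_left, inner_sub_right, real_inner_comm]
    ring
  have hpos : 0 < ‖y - p‖ := norm_pos_iff.2 (sub_ne_zero.2 hyp)
  nlinarith

theorem isMaxOn_dist_mem_innerExposedPoints {S : Set E} {z p : E} (hpS : p ∈ S)
    (hp : IsMaxOn (dist · z) S p) : p ∈ innerExposedPoints S :=
  ⟨hpS, z - p, fun _ hy hyp => inner_lt_of_isMaxOn_dist hp hy hyp⟩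

theorem IsCompact.exists_mem_innerExposedPoints_inner_lt {S : Set E} (hS : IsCompact S)
    {x c : E} {u : ℝ} (hx : x ∈ S) (hxu : ⟪c, x⟫ < u) :
    ∃ p ∈ innerExposedPoints S, ⟪c, p⟫ < u := by
  set δ := u - ⟪c, x⟫
  set D := Metric.diam S
  obtain ⟨R, hRpos, hDR⟩ : ∃ R : ℝ, 0 < R ∧ D ^ 2 < 2 * R * δ := by
    have hδ : 0 < δ := sub_pos.2 hxu
    refine ⟨D ^ 2 / (2 * δ) + 1, by positivity, ?_⟩
    have : 2 * (D ^ 2 / (2 * δ) + 1) * δ = D ^ 2 + 2 * δ := by field_simp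
    linarith
  -- Comparing distances from `x + R • c` gives `2 * R * ⟪c, p - x⟫ ≤ ‖p - x‖ ^ 2 ≤ D ^ 2`.
  obtain ⟨p, hpS, hpmax⟩ := hS.exists_isMaxOn ⟨x, hx⟩
    (continuous_id.dist (continuous_const (y := x + R • c))).continuousOn
  refine ⟨p, isMaxOn_dist_mem_innerExposedPoints hpS hpmax, ?_⟩
  have hfar : ‖R • c‖ ≤ ‖(p - x) - R • c‖ := by
    have : dist x (x + R • c) ≤ dist p (x + R • c) := hpmax hx
    rwa [dist_eq_norm, dist_eq_norm, sub_add_eq_sub_sub, sub_self, zero_sub, norm_neg,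
      ← sub_sub] at this
  have hexpand : ‖(p - x) - R • c‖ ^ 2 = ‖p - x‖ ^ 2 - 2 * R * ⟪c, p - x⟫ + ‖R • c‖ ^ 2 := by
    rw [norm_sub_sq_real, real_inner_smul_right, real_inner_comm]
    ring
  have hdiam : ‖p - x‖ ≤ D := dist_eq_norm p x ▸ Metric.dist_le_diam_of_mem hS.isBounded hpS hx
  have hsq : ‖R • c‖ ^ 2 ≤ ‖(p - x) - R • c‖ ^ 2 := by gcongr
  rw [inner_sub_right] at hexpand
  nlinarith [norm_nonneg (p - x)]

theorem IsCompact.subset_of_innerExposedPoints_subset [CompleteSpace E] {S T : Set E}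
    (hS : IsCompact S) (hT : Convex ℝ T) (hTc : IsClosed T) (hST : innerExposedPoints S ⊆ T) :
    S ⊆ T := by
  intro x hx
  by_contra hxT
  obtain ⟨f, u, hfx, hfT⟩ := geometric_hahn_banach_point_closed hT hTc hxT
  obtain ⟨p, hp, hpu⟩ := hS.exists_mem_innerExposedPoints_inner_lt (u := u)
    (c := (InnerProductSpace.toDual ℝ E).symm f) hx (by rwa [InnerProductSpace.toDual_symm_apply])
  rw [InnerProductSpace.toDual_symm_apply] at hpu
  exact (hfT p (hST hp)).not_gt hpu

end InnerProductSpace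

theorem equilibrium_exposed_points_general (n : ℕ) (S : Set (EuclideanSpace ℝ (Fin n)))
    (hcomp : IsCompact S) (hconv : Convex ℝ S)
    (g : EuclideanSpace ℝ (Fin n) → EuclideanSpace ℝ (Fin n) → ℝ)
    (hqc : ∀ u ∈ S, ∀ v' ∈ S, ∀ v'' ∈ S, ∀ t ∈ Set.Icc (0:ℝ) 1,
      g u ((1 - t) • v' + t • v'') ≤ max (g u v') (g u v''))
    (hlsc : ∀ u ∈ S, LowerSemicontinuousOn (g u) S) :
    {x0 ∈ S | ∀ x ∈ S, g x0 x ≤ 0} =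
      {x0 ∈ S | ∀ x ∈ {x0 ∈ S | ∃ c : EuclideanSpace ℝ (Fin n),
          ∀ y ∈ S, y ≠ x0 → (inner ℝ c x0 : ℝ) < inner ℝ c y}, g x0 x ≤ 0} := by
  ext x0
  refine ⟨fun ⟨hx0, h⟩ => ⟨hx0, fun x hx => h x hx.1⟩, fun ⟨hx0, hexp⟩ => ⟨hx0, ?_⟩⟩
  have hsub : S ⊆ S ∩ g x0 ⁻¹' Iic 0 :=
    hcomp.subset_of_innerExposedPoints_subset (quasiconvexOn_of_le_max hconv (hqc x0 hx0) 0)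
      ((hlsc x0 hx0).isClosed_inter_preimage_Iic hcomp.isClosed 0)
      fun p hp => ⟨hp.1, hexp p hp⟩
  exact fun x hx => (hsub hx).2

theorem equilibrium_exposed_points (n : ℕ) (S : Set (EuclideanSpace ℝ (Fin n)))
    (hS : S.Nonempty) (hcomp : IsCompact S) (hconv : Convex ℝ S)
    (g : EuclideanSpace ℝ (Fin n) → EuclideanSpace ℝ (Fin n) → ℝ)
    (hqc : ∀ u ∈ S, ∀ v' ∈ S, ∀ v'' ∈ S, ∀ t ∈ Set.Icc (0:ℝ) 1,
      g u ((1 - t) • v' + t • v'') ≤ max (g u v') (g u v''))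
    (hlsc : ∀ u ∈ S, LowerSemicontinuousOn (g u) S) :
    {x0 ∈ S | ∀ x ∈ S, g x0 x ≤ 0} =
      {x0 ∈ S | ∀ x ∈ {x0 ∈ S | ∃ c : EuclideanSpace ℝ (Fin n),
          ∀ y ∈ S, y ≠ x0 → (inner ℝ c x0 : ℝ) < inner ℝ c y}, g x0 x ≤ 0} :=
  equilibrium_exposed_points_general n S hcomp hconv g hqc hlsc
end

section
/- Let M ⊆ ℝⁿ be nonempty, S = cl(conv M), and f : S → ℝ quasiconcave and upper semicontinuous. Then argmin_{x ∈ S} f(x) = {x⁰ ∈ S : f(x⁰) ≤ f(x) for all x ∈ M}, and this set contains argmin_{x ∈ M} f(x). -/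
theorem argmin_quasiconcave_usc (n : ℕ) (M : Set (EuclideanSpace ℝ (Fin n))) (hM : M.Nonempty)
    (S : Set (EuclideanSpace ℝ (Fin n))) (hSM : S = closure (convexHull ℝ M))
    (f : EuclideanSpace ℝ (Fin n) → ℝ)
    (hqc : ∀ x ∈ S, ∀ y ∈ S, ∀ t ∈ Set.Icc (0:ℝ) 1,
      min (f x) (f y) ≤ f ((1 - t) • x + t • y))
    (husc : UpperSemicontinuousOn f S) :
    {x0 ∈ S | ∀ x ∈ S, f x0 ≤ f x} = {x0 ∈ S | ∀ x ∈ M, f x0 ≤ f x} ∧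
      {x0 ∈ M | ∀ x ∈ M, f x0 ≤ f x} ⊆ {x0 ∈ S | ∀ x ∈ S, f x0 ≤ f x} := by
  have hMS : M ⊆ S := by
    rw [hSM]; exact (subset_convexHull ℝ M).trans subset_closure
  have hSconv : Convex ℝ S := hSM ▸ (convex_convexHull ℝ M).closure
  have key : ∀ x0 ∈ S, (∀ x ∈ M, f x0 ≤ f x) → ∀ z ∈ S, f x0 ≤ f z := by
    intro x0 hx0 hm z hz
    set A : Set (EuclideanSpace ℝ (Fin n)) := {x | x ∈ S ∧ f x0 ≤ f x} with hA
    have hAconv : Convex ℝ A := by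
      intro x hx y hy a b ha hb hab
      have hxy : a • x + b • y ∈ S := hSconv hx.1 hy.1 ha hb hab
      have hq := hqc x hx.1 y hy.1 b ⟨hb, by linarith⟩
      have h1 : (1 - b) = a := by linarith
      rw [h1] at hq
      exact ⟨hxy, le_trans (le_min hx.2 hy.2) hq⟩
    have hconvA : convexHull ℝ M ⊆ A :=
      convexHull_min (fun x hx => ⟨hMS hx, hm x hx⟩) hAconv
    have hzA : z ∈ closure A := closure_mono hconvA (hSM ▸ hz)
    by_contra hlt
    push_neg at hlt
    have hev0 := husc z hz (f x0) hlt
    have hne : (nhdsWithin z A).NeBot := mem_closure_iff_nhdsWithin_neBot.mp hzA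
    have hev : ∀ᶠ x in nhdsWithin z A, f x < f x0 :=
      hev0.filter_mono (nhdsWithin_mono z (fun x hx => hx.1))
    have hev2 : ∀ᶠ x in nhdsWithin z A, f x0 ≤ f x :=
      eventually_nhdsWithin_of_forall (fun x hx => hx.2)
    obtain ⟨x, h1, h2⟩ := (hev.and hev2).exists
    linarith
  constructor
  · ext x0
    simp only [Set.mem_setOf_eq, Set.mem_sep_iff]
    constructor
    · rintro ⟨h1, h2⟩; exact ⟨h1, fun x hx => h2 x (hMS hx)⟩
    · rintro ⟨h1, h2⟩; exact ⟨h1, key x0 h1 h2⟩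
  · rintro x0 ⟨h1, h2⟩
    exact ⟨hMS h1, key x0 (hMS h1) h2⟩
end
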